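/- For all positive integers r, t, m with m ≤ C(t,r), there exists a left-compressed r-graph G with t vertices and m edges such that λ(G) = λ^r_{(m,t)}, the maximum of the Lagrangian over all r-graphs with t vertices and m edges. -/

import Mathlib

/-- `lagEval E x` is λ(G,x): the sum over the edges of `E` of the product of the
weights (under `x`) of their vertices. -/
def lagEval (E : Finset (Finset ℕ)) (x : ℕ → ℝ) : ℝ :=
  ∑ e ∈ E, ∏ i ∈ e, x i

/-- A feasible weighting: nonnegative entries, finitely supported, total weight 1. -/
def Feasible (x : ℕ → ℝ) : Prop :=
  (∀ i, 0 ≤ x i) ∧ ∃ S : Finset ℕ, (∀ i ∉ S, x i = 0) ∧ ∑ i ∈ S, x i = 1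

/-- A feasible weighting on the vertex set [n] = {1,…,n}. -/
def FeasibleOn (n : ℕ) (x : ℕ → ℝ) : Prop :=
  (∀ i, 0 ≤ x i) ∧ (∀ i ∉ Finset.Icc 1 n, x i = 0) ∧ ∑ i ∈ Finset.Icc 1 n, x i = 1

/-- The Lagrangian λ(G) of a hypergraph with edge set `E`: the supremum (in fact
maximum) of λ(G,x) over all feasible weightings `x`. -/
noncomputable def lagrangian (E : Finset (Finset ℕ)) : ℝ :=
  sSup {y : ℝ | ∃ x : ℕ → ℝ, Feasible x ∧ lagEval E x = y}

/-- `completeG s r` is [s]^{(r)}, the complete r-graph on {1,…,s}. -/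
def completeG (s r : ℕ) : Finset (Finset ℕ) :=
  (Finset.Icc 1 s).powersetCard r

/-- `E` is (the edge set of) an r-graph on the vertex set [n] = {1,…,n}. -/
def IsRGraphOn (r n : ℕ) (E : Finset (Finset ℕ)) : Prop :=
  ∀ e ∈ E, e.card = r ∧ e ⊆ Finset.Icc 1 n

/-- The r-graph `E` contains a clique of order `s` (inside the vertex set `V`):
some `s`-element subset of `V` has all of its `r`-element subsets as edges. -/
def ContainsCliqueOn (V : Finset ℕ) (r s : ℕ) (E : Finset (Finset ℕ)) : Prop :=
  ∃ S : Finset ℕ, S ⊆ V ∧ S.card = s ∧ S.powersetCard r ⊆ E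

/-- `DomLE A B`: `A` and `B` have the same size and, listing both in increasing
order as `i_1 < ⋯ < i_r` and `j_1 < ⋯ < j_r`, one has `i_k ≤ j_k` for all `k`
(equivalently, for every threshold `c`, `A` has at most as many elements above `c`
as `B`). -/
def DomLE (A B : Finset ℕ) : Prop :=
  A.card = B.card ∧
    ∀ c : ℕ, (A.filter fun a => c < a).card ≤ (B.filter fun b => c < b).card

/-- `E` is left-compressed: together with any edge it contains every set of positive
integers dominating it from the left. -/
def LeftCompressed (E : Finset (Finset ℕ)) : Prop :=
  ∀ B ∈ E, ∀ A : Finset ℕ, (∀ a ∈ A, 1 ≤ a) → DomLE A B → A ∈ E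

/-- `nbhd E i` is E_i, the (r-1)-neighborhood of the vertex `i`:
all sets `A` with `i ∉ A` and `A ∪ {i} ∈ E`. -/
def nbhd (E : Finset (Finset ℕ)) (i : ℕ) : Finset (Finset ℕ) :=
  (E.filter fun e => i ∈ e).image fun e => e.erase i

/-- `nbhd2 E i j` is E_{ij}, the (r-2)-neighborhood of the pair of vertices `i, j`. -/
def nbhd2 (E : Finset (Finset ℕ)) (i j : ℕ) : Finset (Finset ℕ) :=
  (E.filter fun e => i ∈ e ∧ j ∈ e).image fun e => (e.erase i).erase j

/-- `C` consists of the first `m` r-element subsets of {1,2,3,…} in the colex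
ordering: it has `m` edges, all of them r-element sets of positive integers, and it
is an initial segment for the colex order. -/
def IsColexSegment (r m : ℕ) (C : Finset (Finset ℕ)) : Prop :=
  C.card = m ∧ (∀ e ∈ C, e.card = r ∧ ∀ a ∈ e, 1 ≤ a) ∧
    ∀ A B : Finset ℕ, A.card = r → (∀ a ∈ A, 1 ≤ a) → B ∈ C →
      toColex A < toColex B → A ∈ C

/-!
Shifting a vertex `j` down to `i < j` (the UV-compression along `{i}` and `{j}`) keeps an
r-graph on `[t]` with `m` edges and does not decrease its Lagrangian: for a weighting with
`x i ≥ x j` every moved edge gains weight, and otherwise swapping `x i` and `x j` reduces to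
that case, because interchanging `i` and `j` in the family does not change its compression.
Among the r-graphs on `[t]` with `m` edges and maximal Lagrangian, one minimising the sum of
the vertices of its edges is therefore closed under all shifts, and a family closed under
shifts contains, together with each edge, every set dominating it from the left.
-/

open Finset UV FinsetFamily

namespace UV

section GeneralizedBooleanAlgebra

variable {α : Type*} [GeneralizedBooleanAlgebra α] [DecidableRel (@Disjoint α _ _)]
  [DecidableLE α] [DecidableEq α] {u v a : α} {s : Finset α}

theorem sum_compression {M : Type*} [AddCommMonoid M] (u v : α) (s : Finset α) (f : α → M) :
    ∑ a ∈ 𝓒 u v s, f a = ∑ a ∈ s, f (if compress u v a ∈ s then a else compress u v a) := by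
  rw [compression, sum_union compress_disjoint, filter_image,
    sum_image fun a ha b hb ↦ compress_injOn (s := s) ha hb, sum_filter, sum_filter,
    ← sum_add_distrib]
  refine sum_congr rfl fun a _ ↦ ?_
  split_ifs <;> simp

theorem mem_compression_of_compress_eq (ha : compress u v a = a) :
    a ∈ 𝓒 u v s ↔ ∃ b ∈ s, compress u v b = a := by
  rw [mem_compression, ha]
  by_cases has : a ∈ s <;> simp [has]
  exact ⟨a, has, ha⟩

theorem mem_compression_of_compress_ne (ha : compress u v a ≠ a) :
    a ∈ 𝓒 u v s ↔ a ∈ s ∧ compress u v a ∈ s := by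
  rw [mem_compression, or_iff_left]
  rintro ⟨-, b, -, rfl⟩
  exact ha (compress_idem u v b)

theorem compression_map_of_involutive {σ : α ≃ α} (hσ : Function.Involutive σ)
    (hcσ : ∀ a, compress u v (σ a) = compress u v a)
    (hc : ∀ a, compress u v a ≠ a → compress u v a = σ a) (s : Finset α) :
    𝓒 u v (s.map σ.toEmbedding) = 𝓒 u v s := by
  have hmem : ∀ a, a ∈ s.map σ.toEmbedding ↔ σ a ∈ s := fun a ↦ by
    rw [mem_map_equiv, σ.symm_apply_eq.2 (hσ a).symm]
  ext a
  by_cases ha : compress u v a = a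
  · simp only [mem_compression_of_compress_eq ha, hmem]
    exact ⟨fun ⟨b, hb, hba⟩ ↦ ⟨σ b, hb, by rwa [hcσ]⟩,
      fun ⟨b, hb, hba⟩ ↦ ⟨σ b, by rwa [hσ], by rwa [hcσ]⟩⟩
  · rw [mem_compression_of_compress_ne ha, mem_compression_of_compress_ne ha, hmem, hmem,
      hc a ha, hσ, and_comm]

end GeneralizedBooleanAlgebra

section Singleton

variable {α : Type*} [DecidableEq α] {i j : α}

theorem compress_singleton (i j : α) (a : Finset α) :
    compress {i} {j} a = if i ∉ a ∧ j ∈ a then insert i (a.erase j) else a := by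
  unfold compress
  simp only [disjoint_singleton_left, singleton_subset_iff]
  split_ifs
  · ext k; simp; grind
  · rfl

theorem map_swap_of_notMem_of_mem {a : Finset α} (hi : i ∉ a) (hj : j ∈ a) :
    a.map (Equiv.swap i j).toEmbedding = insert i (a.erase j) := by
  ext k; simp [Equiv.swap_apply_def]; grind

theorem compression_map_swap (s : Finset (Finset α)) :
    𝓒 {i} {j} (s.map (Equiv.swap i j).finsetCongr.toEmbedding) = 𝓒 {i} {j} s := by
  refine compression_map_of_involutive (fun a ↦ ?_) (fun a ↦ ?_) (fun a ha ↦ ?_) s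
  · ext k; simp
  · have hi : i ∈ a.map (Equiv.swap i j).toEmbedding ↔ j ∈ a := by simp
    have hj : j ∈ a.map (Equiv.swap i j).toEmbedding ↔ i ∈ a := by simp
    simp only [compress_singleton, Equiv.finsetCongr_apply, hi, hj]
    split_ifs <;> ext k <;> simp [Equiv.swap_apply_def] <;> grind
  · rw [compress_singleton] at ha ⊢
    split_ifs at ha ⊢ with h
    · rw [Equiv.finsetCongr_apply, map_swap_of_notMem_of_mem h.1 h.2]
    · exact absurd rfl ha

theorem compress_singleton_mem_powersetCard {V : Finset α} {r : ℕ} {a : Finset α} (hi : i ∈ V)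
    (ha : a ∈ V.powersetCard r) : compress {i} {j} a ∈ V.powersetCard r := by
  rw [mem_powersetCard] at ha ⊢
  refine ⟨?_, by rw [card_compress (by simp), ha.2]⟩
  rw [compress_singleton]
  split_ifs
  exacts [insert_subset hi ((erase_subset _ _).trans ha.1), ha.1]

theorem compression_subset_powersetCard {V : Finset α} {r : ℕ} {s : Finset (Finset α)}
    (hi : i ∈ V) (hs : s ⊆ V.powersetCard r) : 𝓒 {i} {j} s ⊆ V.powersetCard r := by
  intro a ha
  obtain ⟨ha, -⟩ | ⟨-, b, hb, rfl⟩ := mem_compression.1 ha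
  exacts [hs ha, compress_singleton_mem_powersetCard hi (hs hb)]

end Singleton

end UV

lemma Feasible.le_one {x : ℕ → ℝ} (hx : Feasible x) (k : ℕ) : x k ≤ 1 := by
  obtain ⟨hpos, S, hS0, hS1⟩ := hx
  by_cases hk : k ∈ S
  · exact hS1 ▸ single_le_sum (fun i _ ↦ hpos i) hk
  · exact (hS0 k hk).trans_le zero_le_one

lemma Feasible.comp_equiv {x : ℕ → ℝ} (hx : Feasible x) (e : ℕ ≃ ℕ) : Feasible (x ∘ e) := by
  obtain ⟨hpos, S, hS0, hS1⟩ := hx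
  refine ⟨fun k ↦ hpos (e k), S.map e.symm.toEmbedding, fun k hk ↦ hS0 _ ?_, ?_⟩
  · rwa [mem_map_equiv, e.symm_symm] at hk
  · simpa [sum_map] using hS1

lemma feasible_single (k : ℕ) : Feasible (Pi.single k 1) :=
  ⟨fun i ↦ by by_cases h : i = k <;> simp [h], {k}, fun i hi ↦ by simp_all, by simp⟩

lemma lagEval_le_card {E : Finset (Finset ℕ)} {x : ℕ → ℝ} (hx : Feasible x) :
    lagEval E x ≤ #E := by
  rw [lagEval, card_eq_sum_ones, Nat.cast_sum, Nat.cast_one]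
  exact sum_le_sum fun e _ ↦ prod_le_one (fun i _ ↦ hx.1 i) fun i _ ↦ hx.le_one i

lemma lagEval_map_finsetCongr (e : ℕ ≃ ℕ) (F : Finset (Finset ℕ)) (x : ℕ → ℝ) :
    lagEval (F.map e.finsetCongr.toEmbedding) x = lagEval F (x ∘ e) := by
  simp [lagEval, sum_map, prod_map]

lemma le_lagrangian {E : Finset (Finset ℕ)} {x : ℕ → ℝ} (hx : Feasible x) :
    lagEval E x ≤ lagrangian E :=
  le_csSup ⟨#E, by rintro _ ⟨y, hy, rfl⟩; exact lagEval_le_card hy⟩ ⟨x, hx, rfl⟩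

lemma lagrangian_le {E : Finset (Finset ℕ)} {c : ℝ}
    (h : ∀ x : ℕ → ℝ, Feasible x → lagEval E x ≤ c) : lagrangian E ≤ c :=
  csSup_le ⟨_, _, feasible_single 0, rfl⟩ fun _ ⟨x, hx, hxc⟩ ↦ hxc ▸ h x hx

lemma prod_le_prod_compress {x : ℕ → ℝ} {i j : ℕ} (hx : ∀ k, 0 ≤ x k) (hij : x j ≤ x i)
    (a : Finset ℕ) : ∏ k ∈ a, x k ≤ ∏ k ∈ compress {i} {j} a, x k := by
  rw [compress_singleton]
  split_ifs with h
  · rw [prod_insert fun hi ↦ h.1 (mem_of_mem_erase hi), ← mul_prod_erase a x h.2]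
    exact mul_le_mul_of_nonneg_right hij (prod_nonneg fun k _ ↦ hx k)
  · exact le_rfl

lemma lagEval_le_lagEval_compression {x : ℕ → ℝ} {i j : ℕ} (hx : ∀ k, 0 ≤ x k)
    (hij : x j ≤ x i) (F : Finset (Finset ℕ)) : lagEval F x ≤ lagEval (𝓒 {i} {j} F) x := by
  rw [lagEval, lagEval, sum_compression]
  refine sum_le_sum fun a _ ↦ ?_
  split_ifs
  exacts [le_rfl, prod_le_prod_compress hx hij a]

theorem lagrangian_le_lagrangian_compression (i j : ℕ) (F : Finset (Finset ℕ)) :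
    lagrangian F ≤ lagrangian (𝓒 {i} {j} F) := by
  refine lagrangian_le fun x hx ↦ ?_
  rcases le_total (x j) (x i) with h | h
  · exact (lagEval_le_lagEval_compression hx.1 h F).trans (le_lagrangian hx)
  · have hy : Feasible (x ∘ Equiv.swap i j) := hx.comp_equiv _
    calc lagEval F x
        = lagEval (F.map (Equiv.swap i j).finsetCongr.toEmbedding) (x ∘ Equiv.swap i j) := by
          simp only [lagEval_map_finsetCongr, Function.comp_def, Equiv.swap_apply_self]
      _ ≤ lagEval (𝓒 {i} {j} F) (x ∘ Equiv.swap i j) := by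
          rw [← compression_map_swap]
          exact lagEval_le_lagEval_compression hy.1 (by simpa using h) _
      _ ≤ lagrangian (𝓒 {i} {j} F) := le_lagrangian hy

def vertexSum (F : Finset (Finset ℕ)) : ℕ := ∑ e ∈ F, ∑ k ∈ e, k

lemma sum_compress_lt {i j : ℕ} (hij : i < j) {a : Finset ℕ} (ha : compress {i} {j} a ≠ a) :
    ∑ k ∈ compress {i} {j} a, k < ∑ k ∈ a, k := by
  rw [compress_singleton] at ha ⊢
  split_ifs at ha ⊢ with h
  · rw [sum_insert fun hi ↦ h.1 (mem_of_mem_erase hi), ← add_sum_erase a (fun k ↦ k) h.2]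
    omega
  · exact absurd rfl ha

lemma vertexSum_compression_lt {i j : ℕ} (hij : i < j) {F : Finset (Finset ℕ)} {a : Finset ℕ}
    (ha : a ∈ F) (hca : compress {i} {j} a ∉ F) : vertexSum (𝓒 {i} {j} F) < vertexSum F := by
  have hle : ∀ b, ∑ k ∈ compress {i} {j} b, k ≤ ∑ k ∈ b, k := fun b ↦
    (eq_or_ne (compress {i} {j} b) b).elim (fun h ↦ by rw [h]) fun h ↦ (sum_compress_lt hij h).le
  rw [vertexSum, vertexSum, sum_compression]
  refine sum_lt_sum (fun b _ ↦ ?_) ⟨a, ha, ?_⟩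
  · split_ifs
    exacts [le_rfl, hle b]
  · rw [if_neg hca]
    exact sum_compress_lt hij fun h ↦ hca (by rwa [h])

theorem exists_max_forall_compress_mem {β : Type*} [LinearOrder β]
    (𝒢 : Finset (Finset (Finset ℕ))) (h𝒢 : 𝒢.Nonempty) (V : Finset ℕ)
    (hV : ∀ F ∈ 𝒢, ∀ i ∈ V, ∀ j, 𝓒 {i} {j} F ∈ 𝒢) (f : Finset (Finset ℕ) → β)
    (hf : ∀ i j F, f F ≤ f (𝓒 {i} {j} F)) :
    ∃ E ∈ 𝒢, (∀ F ∈ 𝒢, f F ≤ f E) ∧ ∀ i ∈ V, ∀ j, i < j → ∀ a ∈ E, compress {i} {j} a ∈ E := by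
  obtain ⟨E₀, hE₀, hmax⟩ := exists_max_image 𝒢 f h𝒢
  obtain ⟨E, hE, hmin⟩ := exists_min_image (𝒢.filter fun F ↦ f F = f E₀) vertexSum
    ⟨E₀, mem_filter.2 ⟨hE₀, rfl⟩⟩
  obtain ⟨hE𝒢, hEf⟩ := mem_filter.1 hE
  refine ⟨E, hE𝒢, hEf ▸ hmax, fun i hi j hij a ha ↦ by_contra fun hca ↦ ?_⟩
  have hC𝒢 := hV E hE𝒢 i hi j
  have hC : 𝓒 {i} {j} E ∈ 𝒢.filter fun F ↦ f F = f E₀ :=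
    mem_filter.2 ⟨hC𝒢, (hmax _ hC𝒢).antisymm (hEf ▸ hf i j E)⟩
  exact (hmin _ hC).not_gt (vertexSum_compression_lt hij ha hca)

lemma card_filter_lt_lt_card_filter_lt {A B : Finset ℕ} {c i : ℕ} (hcard : #A = #B)
    (hlow : ∀ b ∈ B, b ≤ c → b ∈ A) (hiA : i ∈ A) (hiB : i ∉ B) (hic : i ≤ c) :
    #{a ∈ A | c < a} < #{b ∈ B | c < b} := by
  have hssub : {b ∈ B | b ≤ c} ⊂ {a ∈ A | a ≤ c} := by
    refine (ssubset_iff_of_subset fun b hb ↦ ?_).2 ⟨i, mem_filter.2 ⟨hiA, hic⟩, ?_⟩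
    · obtain ⟨hbB, hbc⟩ := mem_filter.1 hb
      exact mem_filter.2 ⟨hlow b hbB hbc, hbc⟩
    · exact fun hi ↦ hiB (mem_filter.1 hi).1
  have hA := card_filter_add_card_filter_not (s := A) (fun a ↦ c < a)
  have hB := card_filter_add_card_filter_not (s := B) (fun b ↦ c < b)
  simp only [not_lt] at hA hB
  have := card_lt_card hssub
  omega

/-- The least element of `A \ B` replaces the least element of `B \ A`. -/
lemma DomLE.exists_shift {A B : Finset ℕ} (h : DomLE A B) (hAB : ¬A ⊆ B) :
    ∃ i ∈ A \ B, ∃ j ∈ B \ A, i < j ∧ DomLE A (insert i (B.erase j)) := by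
  have hA : (A \ B).Nonempty := sdiff_nonempty.2 hAB
  have hB : (B \ A).Nonempty := sdiff_nonempty.2 fun hBA ↦
    hAB (eq_of_subset_of_card_le hBA h.1.le).ge
  set i := (A \ B).min' hA
  set j := (B \ A).min' hB
  obtain ⟨hiA, hiB⟩ := mem_sdiff.1 (min'_mem _ hA)
  obtain ⟨hjB, hjA⟩ := mem_sdiff.1 (min'_mem _ hB)
  have hA_low : ∀ a ∈ A, a < i → a ∈ B := fun a ha hai ↦
    by_contra fun haB ↦ hai.not_ge (min'_le _ _ (mem_sdiff.2 ⟨ha, haB⟩))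
  have hB_low : ∀ b ∈ B, b < j → b ∈ A := fun b hb hbj ↦
    by_contra fun hbA ↦ hbj.not_ge (min'_le _ _ (mem_sdiff.2 ⟨hb, hbA⟩))
  have hij : i < j := by
    by_contra! hji
    have hji : j < i := hji.lt_of_ne (ne_of_mem_of_not_mem hjB hiB)
    exact (h.2 j).not_gt (card_filter_lt_lt_card_filter_lt h.1.symm
      (fun a ha haj ↦ hA_low a ha (haj.trans_lt hji)) hjB hjA le_rfl)
  refine ⟨i, mem_sdiff.2 ⟨hiA, hiB⟩, j, mem_sdiff.2 ⟨hjB, hjA⟩, hij, ?_, fun c ↦ ?_⟩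
  · rw [card_insert_of_notMem fun hi ↦ hiB (mem_of_mem_erase hi), card_erase_of_mem hjB, h.1]
    have := card_pos.2 ⟨j, hjB⟩
    omega
  have hc := h.2 c
  rw [filter_insert, filter_erase]
  by_cases hci : c < i
  · have hjc : j ∈ {b ∈ B | c < b} := mem_filter.2 ⟨hjB, hci.trans hij⟩
    rw [if_pos hci, card_insert_of_notMem fun hi ↦ hiB (mem_filter.1 (mem_of_mem_erase hi)).1,
      card_erase_add_one hjc]
    exact hc
  rw [if_neg hci]
  by_cases hcj : c < j
  · rw [card_erase_of_mem (mem_filter.2 ⟨hjB, hcj⟩)]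
    exact Nat.le_sub_one_of_lt (card_filter_lt_lt_card_filter_lt h.1
      (fun b hb hbc ↦ hB_low b hb (hbc.trans_lt hcj)) hiA hiB (not_lt.1 hci))
  · rw [erase_eq_of_notMem fun hj ↦ hcj (mem_filter.1 hj).2]
    exact hc

theorem leftCompressed_of_forall_insert_erase_mem {E : Finset (Finset ℕ)}
    (hE : ∀ e ∈ E, ∀ i j, 1 ≤ i → i < j → j ∈ e → i ∉ e → insert i (e.erase j) ∈ E) :
    LeftCompressed E := by
  intro B hB A hA hAB
  obtain ⟨n, hn⟩ : ∃ n, #(A \ B) = n := ⟨_, rfl⟩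
  induction n generalizing B with
  | zero =>
    have hsub : A ⊆ B := sdiff_eq_empty_iff_subset.1 (card_eq_zero.1 hn)
    rwa [eq_of_subset_of_card_le hsub hAB.1.ge]
  | succ n ih =>
    have hsub : ¬A ⊆ B := fun hs ↦ by simp [sdiff_eq_empty_iff_subset.2 hs] at hn
    obtain ⟨i, hi, j, hj, hij, hAB'⟩ := hAB.exists_shift hsub
    rw [mem_sdiff] at hi hj
    refine ih _ (hE B hB i j (hA i hi.1) hij hj.1 hi.2) hAB' ?_
    have hsd : A \ insert i (B.erase j) = (A \ B).erase i := by
      ext a; simp only [mem_sdiff, mem_insert, mem_erase]; grind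
    rw [hsd, card_erase_of_mem (mem_sdiff.2 hi), hn, Nat.add_sub_cancel]

theorem stmt9_general (r t m : ℕ) (hmt : m ≤ t.choose r) :
    ∃ E : Finset (Finset ℕ), IsRGraphOn r t E ∧ E.card = m ∧ LeftCompressed E ∧
      lagrangian E = sSup {y : ℝ | ∃ F : Finset (Finset ℕ),
        IsRGraphOn r t F ∧ F.card = m ∧ lagrangian F = y} := by
  set 𝒢 := (completeG t r).powersetCard m
  have hmem : ∀ F, F ∈ 𝒢 ↔ IsRGraphOn r t F ∧ F.card = m := fun F ↦ by
    simp only [𝒢, completeG, IsRGraphOn, mem_powersetCard, subset_iff, and_comm]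
  have h𝒢 : 𝒢.Nonempty := by simpa [𝒢, completeG] using hmt
  have h𝒢closed : ∀ F ∈ 𝒢, ∀ i ∈ Icc 1 t, ∀ j, 𝓒 {i} {j} F ∈ 𝒢 := fun F hF i hi j ↦
    mem_powersetCard.2 ⟨compression_subset_powersetCard hi (mem_powersetCard.1 hF).1,
      (card_compression _ _ _).trans (mem_powersetCard.1 hF).2⟩
  obtain ⟨E, hE, hmax, hshift⟩ := exists_max_forall_compress_mem 𝒢 h𝒢 (Icc 1 t) h𝒢closed
    lagrangian lagrangian_le_lagrangian_compression
  obtain ⟨hEr, hEm⟩ := (hmem E).1 hE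
  refine ⟨E, hEr, hEm, leftCompressed_of_forall_insert_erase_mem fun e he i j hi hij hj hie ↦ ?_, ?_⟩
  · have hjt := (mem_Icc.1 ((hEr e he).2 hj)).2
    simpa [compress_singleton, hie, hj] using hshift i (mem_Icc.2 ⟨hi, by omega⟩) j hij e he
  · refine (IsGreatest.csSup_eq ?_).symm
    exact ⟨⟨E, hEr, hEm, rfl⟩, fun _ ⟨F, hFr, hFm, hF⟩ ↦ hF ▸ hmax F ((hmem F).2 ⟨hFr, hFm⟩)⟩

/-- There is a left-compressed r-graph with `t` vertices and `m` edges whose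
Lagrangian is `λ^r_{(m,t)}`, the maximum Lagrangian over all r-graphs with `t`
vertices and `m` edges. -/
theorem stmt9 (r t m : ℕ) (hr : 0 < r) (ht : 0 < t) (hm : 0 < m)
    (hmt : m ≤ t.choose r) :
    ∃ E : Finset (Finset ℕ), IsRGraphOn r t E ∧ E.card = m ∧ LeftCompressed E ∧
      lagrangian E = sSup {y : ℝ | ∃ F : Finset (Finset ℕ),
        IsRGraphOn r t F ∧ F.card = m ∧ lagrangian F = y} :=
  stmt9_general r t m hmt
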